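/- arXiv:1503.06430 — 4 statements merged into one kernel-verified Lean document; each statement's English description precedes it below -/
import Mathlib

section
/- Let Δ be a (d−1)-dimensional balanced simplicial complex on [n] with coloring map κ, and give the polynomial ring R = K[x_1,…,x_n] the Z^d-grading with deg x_v = e_{κ(v)}. Then the Z^d-graded Hilbert series of the Stanley-Reisner ring K[Δ] satisfies Σ_{a ∈ Z^d} dim_K (K[Δ])_a · t^a = (Σ_{S ⊆ [d]} h_S(Δ) Π_{i∈S} t_i) / ((1−t_1)(1−t_2)⋯(1−t_d)), as formal power series in t_1,…,t_d. -/
/-! In a balanced complex every face has distinct colours, so a monomial whose support is a face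
`F` is determined by `F` and its `ℤ^d`-degree `a`, and then `κ(F) = supp a`. Hence `K[Δ]_a` has a
basis indexed by the faces of colour set `supp a`, and the Hilbert series is
`∑_a f_{supp a}(Δ) t^a`. Möbius inversion on the Boolean lattice gives `f_S = ∑_{T ⊆ S} h_T`,
so this series is `∑_T h_T t^T · ∑_a t^a = ∑_T h_T t^T / ∏ (1 - t_i)`. -/

open Finset BigOperators

namespace BGLB

variable {V : Type*} [DecidableEq V]

/-- `Δ` is an (abstract) simplicial complex: it contains the empty face and is
closed under taking subsets. -/
def IsComplex (Δ : Finset (Finset V)) : Prop :=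
  ∅ ∈ Δ ∧ ∀ F ∈ Δ, ∀ G ⊆ F, G ∈ Δ

/-- `Δ` is pure of dimension `d - 1`: every face is contained in a face of cardinality `d`. -/
def IsPure (d : ℕ) (Δ : Finset (Finset V)) : Prop :=
  ∀ F ∈ Δ, ∃ G ∈ Δ, F ⊆ G ∧ G.card = d

/-- `Δ` has dimension at most `d - 1`. -/
def DimLE (d : ℕ) (Δ : Finset (Finset V)) : Prop := ∀ F ∈ Δ, F.card ≤ d

/-- `Δ` has dimension exactly `d - 1`. -/
def DimEq (d : ℕ) (Δ : Finset (Finset V)) : Prop := DimLE d Δ ∧ ∃ F ∈ Δ, F.card = d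

/-- `fNum Δ j` is the number `f_{j-1}(Δ)` of faces of `Δ` of cardinality `j`. -/
def fNum (Δ : Finset (Finset V)) (j : ℕ) : ℕ := (Δ.filter fun F => F.card = j).card

/-- The `h`-numbers of `Δ` with respect to the dimension parameter `d`:
`h_i = ∑_{j=0}^{i} (-1)^{i-j} C(d-j, i-j) f_{j-1}`. -/
def hNum (d : ℕ) (Δ : Finset (Finset V)) (i : ℕ) : ℤ :=
  ∑ j ∈ Finset.range (i + 1), (-1 : ℤ) ^ (i - j) * ((d - j).choose (i - j)) * fNum Δ j

/-- The balanced `g`-numbers `g̅_i = i h_i - (d - i + 1) h_{i-1}` (with `h_{-1} = 0`). -/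
def gbar (d : ℕ) (Δ : Finset (Finset V)) : ℕ → ℤ
  | 0 => 0
  | i + 1 => (i + 1 : ℤ) * hNum d Δ (i + 1) - ((d : ℤ) - (i + 1) + 1) * hNum d Δ i

/-- `κ` is a proper `d`-coloring of (the graph of) `Δ`: the two endpoints of any
edge get different colors. -/
def IsBalanced (d : ℕ) (Δ : Finset (Finset V)) (κ : V → Fin d) : Prop :=
  ∀ F ∈ Δ, F.card = 2 → ∀ x ∈ F, ∀ y ∈ F, x ≠ y → κ x ≠ κ y

/-- The rank-selected subcomplex `Δ_T = {F ∈ Δ : κ(F) ⊆ T}`. -/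
def rankSel {d : ℕ} (Δ : Finset (Finset V)) (κ : V → Fin d) (T : Finset (Fin d)) :
    Finset (Finset V) :=
  Δ.filter fun F => ∀ v ∈ F, κ v ∈ T

/-- The link `lk_Δ(F) = {G ∈ Δ : F ∪ G ∈ Δ, F ∩ G = ∅}`. -/
def link (Δ : Finset (Finset V)) (F : Finset V) : Finset (Finset V) :=
  Δ.filter fun G => Disjoint F G ∧ F ∪ G ∈ Δ





/-- The Stanley-Reisner ideal of `Δ` in `K[x_v : v ∈ V]`: the ideal generated by the
squarefree monomials `x_F = ∏_{v ∈ F} x_v` for the non-faces `F ∉ Δ`. -/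
noncomputable def srIdeal (K : Type*) [Field K] (Δ : Finset (Finset V)) : Ideal (MvPolynomial V K) :=
  Ideal.span {m | ∃ F : Finset V, F ∉ Δ ∧ m = ∏ v ∈ F, MvPolynomial.X v}

/-- The sum of variables of color `i`: `θ_i = ∑_{κ(v) = i} x_v`. -/
noncomputable def colorSum (K : Type*) [Field K] {n d : ℕ} (κ : Fin n → Fin d) (i : Fin d) :
    MvPolynomial (Fin n) K :=
  ∑ v ∈ Finset.univ.filter (fun v => κ v = i), MvPolynomial.X v

/-- The degree `i` component (w.r.t. the standard grading) of the quotient of a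
polynomial ring by the ideal `I`, as the image of the degree `i` homogeneous part. -/
noncomputable def piece (K : Type*) [Field K] {σ : Type*} (I : Ideal (MvPolynomial σ K)) (i : ℕ) :
    Submodule K (MvPolynomial σ K ⧸ I) :=
  (MvPolynomial.homogeneousSubmodule σ K i).map (Ideal.Quotient.mkₐ K I).toLinearMap

/-- The degree `a` component (w.r.t. the grading weighted by `w`) of the quotient of a
polynomial ring by the ideal `I`. -/
noncomputable def wpiece (K : Type*) [Field K] {σ M : Type*} [AddCommMonoid M] (w : σ → M)
    (I : Ideal (MvPolynomial σ K)) (a : M) :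
    Submodule K (MvPolynomial σ K ⧸ I) :=
  (MvPolynomial.weightedHomogeneousSubmodule K w a).map (Ideal.Quotient.mkₐ K I).toLinearMap

/-- `θ` is a linear system of parameters for `(MvPolynomial σ K) ⧸ I`:
a sequence of linear forms such that the quotient by them is a finite-dimensional
`K`-vector space. -/
def IsLSOP (K : Type*) [Field K] {σ : Type*} (I : Ideal (MvPolynomial σ K)) {m : ℕ}
    (θ : Fin m → MvPolynomial σ K) : Prop :=
  (∀ i, θ i ∈ MvPolynomial.homogeneousSubmodule σ K 1) ∧
    FiniteDimensional K (MvPolynomial σ K ⧸ (I ⊔ Ideal.span (Set.range θ)))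

/-- `Δ` (of dimension `d - 1`) is Cohen-Macaulay over `K`: every linear system of
parameters of the Stanley-Reisner ring `K[Δ]` is a regular sequence on `K[Δ]`. -/
def IsCM (K : Type*) [Field K] (d : ℕ) (Δ : Finset (Finset V)) : Prop :=
  ∀ θ : Fin d → MvPolynomial V K, IsLSOP K (srIdeal K Δ) θ →
    RingTheory.Sequence.IsRegular (MvPolynomial V K ⧸ srIdeal K Δ) (List.ofFn θ)

section Homology

variable [LinearOrder V] [Fintype V] (K : Type*) [Field K]

/-- The faces of `Δ` of cardinality `k`. -/
def Faces (Δ : Finset (Finset V)) (k : ℕ) : Type _ := {F : Finset V // F ∈ Δ ∧ F.card = k}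

/-- The simplicial (reduced) boundary map from `k+1`-element faces to `k`-element faces:
`∂(e_F) = ∑_{v ∈ F} (-1)^{|{u ∈ F : u < v}|} e_{F \ v}`, written in the dual basis. -/
noncomputable def bdry (Δ : Finset (Finset V)) (k : ℕ) :
    ((Faces Δ (k + 1) → K) →ₗ[K] (Faces Δ k → K)) :=
  LinearMap.pi fun G =>
    ∑ v ∈ Finset.univ \ G.1,
      if h : insert v G.1 ∈ Δ ∧ (insert v G.1).card = k + 1 then
        ((-1 : K) ^ (G.1.filter (fun u => u < v)).card) •
          (LinearMap.proj (⟨insert v G.1, h⟩ : Faces Δ (k + 1)))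
      else 0

/-- The reduced cycles in cardinality `k`: everything for `k = 0` (chains on the empty
face), and the kernel of the boundary map for `k ≥ 1`. -/
noncomputable def cycles (Δ : Finset (Finset V)) : (k : ℕ) → Submodule K (Faces Δ k → K)
  | 0 => ⊤
  | j + 1 => LinearMap.ker (bdry K Δ j)

/-- The reduced simplicial homology `H̃_{k-1}(Δ; K)` (indexed so that `k` is the
cardinality of the faces involved): cycles modulo boundaries. -/
noncomputable abbrev redHomology (Δ : Finset (Finset V)) (k : ℕ) :=
  cycles K Δ k ⧸ (LinearMap.range (bdry K Δ k)).comap (cycles K Δ k).subtype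

/-- `Δ` (of dimension `d-1`) is Gorenstein* over `K`: for every face `F ∈ Δ`, the link of
`F` has the reduced homology of a sphere of dimension `d - 1 - #F`. -/
def IsGorensteinStar (d : ℕ) (Δ : Finset (Finset V)) : Prop :=
  ∀ F ∈ Δ, ∀ k : ℕ,
    (k = d - F.card → Nonempty (redHomology K (link Δ F) k ≃ₗ[K] K)) ∧
    (k ≠ d - F.card → Subsingleton (redHomology K (link Δ F) k))

end Homology

/-- The flag `f`-number `f_S(Δ) = #{F ∈ Δ : κ(F) = S}`. -/
def fFlag {d : ℕ} (κ : V → Fin d) (Δ : Finset (Finset V)) (S : Finset (Fin d)) : ℕ :=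
  (Δ.filter fun F => F.image κ = S).card

/-- The flag `h`-number `h_S(Δ) = ∑_{T ⊆ S} (-1)^{#S - #T} f_T(Δ)`. -/
def hFlag {d : ℕ} (κ : V → Fin d) (Δ : Finset (Finset V)) (S : Finset (Fin d)) : ℤ :=
  ∑ T ∈ S.powerset, (-1 : ℤ) ^ (S.card - T.card) * fFlag κ Δ T


section Exponents

variable {σ : Type*}

noncomputable def sqfreeExp (T : Finset σ) : σ →₀ ℕ := ∑ i ∈ T, Finsupp.single i 1

lemma sqfreeExp_apply [DecidableEq σ] (T : Finset σ) (i : σ) :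
    sqfreeExp T i = if i ∈ T then 1 else 0 := by
  simp [sqfreeExp, Finsupp.finsetSum_apply, Finsupp.single_apply]

lemma sqfreeExp_le_iff [DecidableEq σ] {T : Finset σ} {m : σ →₀ ℕ} :
    sqfreeExp T ≤ m ↔ T ⊆ m.support := by
  simp only [Finsupp.le_def, sqfreeExp_apply, Finset.subset_iff, Finsupp.mem_support_iff]
  refine forall_congr' fun i => ?_
  split_ifs with hi <;> simp [hi, Nat.one_le_iff_ne_zero]

lemma prod_X_eq_monomial_sqfreeExp {R : Type*} [CommSemiring R] (T : Finset σ) :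
    ∏ i ∈ T, (MvPowerSeries.X i : MvPowerSeries σ R) =
      MvPowerSeries.monomial (sqfreeExp T) 1 := by
  have := MvPowerSeries.prod_monomial (R := R) (fun i => Finsupp.single i 1) (fun _ => 1) T
  rwa [Finset.prod_const_one] at this

end Exponents

lemma sum_powerset_moebius_inversion {σ R : Type*} [DecidableEq σ] [CommRing R]
    (f : Finset σ → R) (S : Finset σ) :
    ∑ T ∈ S.powerset, ∑ U ∈ T.powerset, (-1 : R) ^ (T.card - U.card) * f U = f S := by
  have hswap : ∑ T ∈ S.powerset, ∑ U ∈ T.powerset, (-1 : R) ^ (T.card - U.card) * f U =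
      ∑ U ∈ S.powerset, (∑ T ∈ Finset.Icc U S, (-1 : R) ^ (T.card - U.card)) * f U := by
    simp_rw [Finset.sum_mul]
    refine Finset.sum_comm' fun T U => ?_
    simp only [Finset.mem_powerset, Finset.mem_Icc]
    exact ⟨fun h => ⟨⟨h.2, h.1⟩, h.2.trans h.1⟩, fun h => ⟨h.1.2, h.1.1⟩⟩
  have hinner : ∀ U ∈ S.powerset,
      ∑ T ∈ Finset.Icc U S, (-1 : R) ^ (T.card - U.card) = if U = S then 1 else 0 := by
    intro U hU
    rw [Finset.mem_powerset] at hU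
    have hdisj : ∀ W ∈ (S \ U).powerset, Disjoint U W := fun W hW =>
      Finset.disjoint_of_subset_right (Finset.mem_powerset.mp hW) Finset.disjoint_sdiff
    have hcard : ∀ W ∈ (S \ U).powerset, (U ∪ W).card - U.card = W.card := fun W hW => by
      rw [Finset.card_union_of_disjoint (hdisj W hW), Nat.add_sub_cancel_left]
    rw [Finset.Icc_eq_image_powerset hU, Finset.sum_image, Finset.sum_congr rfl fun W hW => by
      rw [hcard W hW]]
    · have := congrArg (Int.cast : ℤ → R) (Finset.sum_powerset_neg_one_pow_card (x := S \ U))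
      push_cast at this
      simp only [this, Finset.sdiff_eq_empty_iff_subset]
      exact if_congr ⟨fun h => hU.antisymm h, fun h => h.ge⟩ rfl rfl
    · intro W hW W' hW' h
      rw [← Finset.union_sdiff_cancel_left (hdisj W hW), ← Finset.union_sdiff_cancel_left
        (hdisj W' hW')]
      exact congrArg (· \ U) h
  rw [hswap, Finset.sum_congr rfl fun U hU => by rw [hinner U hU]]
  simp

section PowerSeries

open MvPowerSeries

variable {σ R : Type*} [CommRing R]

noncomputable def geomSeries [DecidableEq σ] (s : Finset σ) : MvPowerSeries σ R :=
  fun a => if a.support ⊆ s then 1 else 0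

lemma coeff_geomSeries [DecidableEq σ] (s : Finset σ) (a : σ →₀ ℕ) :
    coeff a (geomSeries s : MvPowerSeries σ R) = if a.support ⊆ s then 1 else 0 :=
  rfl

lemma geomSeries_insert_mul_one_sub_X [DecidableEq σ] {s : Finset σ} {j : σ} (hj : j ∉ s) :
    geomSeries (insert j s) * (1 - X j) = (geomSeries s : MvPowerSeries σ R) := by
  ext a
  have hle : Finsupp.single j 1 ≤ a ↔ a j ≠ 0 := by
    rw [Finsupp.single_le_iff, Nat.one_le_iff_ne_zero]
  rw [mul_sub, mul_one, map_sub, X, coeff_mul_monomial, mul_one]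
  by_cases haj : a j = 0
  · have hja : j ∉ a.support := Finsupp.notMem_support_iff.mpr haj
    simp only [if_neg (hle.not.mpr (not_not.mpr haj)), sub_zero, coeff_geomSeries,
      Finset.subset_insert_iff_of_notMem hja]
  · have hja : j ∈ a.support := Finsupp.mem_support_iff.mpr haj
    have hsub : (a - Finsupp.single j 1).support ⊆ insert j s ↔ a.support ⊆ insert j s := by
      rw [Finset.subset_insert_iff, Finset.subset_insert_iff]
      congr! 1
      ext i
      by_cases hij : i = j <;> simp [hij]
    simp only [if_pos (hle.mpr haj), coeff_geomSeries, hsub, sub_self,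
      if_neg fun h : a.support ⊆ s => hj (h hja)]

lemma geomSeries_mul_prod_one_sub_X [DecidableEq σ] (s : Finset σ) :
    geomSeries s * ∏ i ∈ s, (1 - X i) = (1 : MvPowerSeries σ R) := by
  induction s using Finset.induction_on with
  | empty =>
    ext a
    simp [coeff_geomSeries, coeff_one]
  | insert j s hj ih =>
    rw [Finset.prod_insert hj, ← mul_assoc, geomSeries_insert_mul_one_sub_X hj, ih]

noncomputable def supportSeries (f : Finset σ → R) : MvPowerSeries σ R := fun a => f a.support

theorem supportSeries_mul_prod_one_sub_X [Fintype σ] [DecidableEq σ] (f : Finset σ → R) :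
    supportSeries f * ∏ i, (1 - X i) =
      ∑ S ∈ (Finset.univ : Finset σ).powerset,
        C (∑ T ∈ S.powerset, (-1 : R) ^ (S.card - T.card) * f T) * ∏ i ∈ S, X i := by
  set h : Finset σ → R := fun S => ∑ T ∈ S.powerset, (-1 : R) ^ (S.card - T.card) * f T
  suffices hf : supportSeries f =
      (∑ S ∈ (Finset.univ : Finset σ).powerset, C (h S) * ∏ i ∈ S, X i) * geomSeries Finset.univ by
    rw [hf, mul_assoc, geomSeries_mul_prod_one_sub_X, mul_one]
  ext a
  have hcoeff : ∀ S : Finset σ, coeff a (C (h S) * (∏ i ∈ S, X i) * geomSeries Finset.univ) =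
      if S ⊆ a.support then h S else 0 := fun S => by
    rw [mul_assoc, coeff_C_mul, prod_X_eq_monomial_sqfreeExp, coeff_monomial_mul,
      coeff_geomSeries, if_pos (Finset.subset_univ _), mul_one]
    simp only [sqfreeExp_le_iff, mul_ite, mul_one, mul_zero]
  rw [Finset.sum_mul, map_sum, Finset.sum_congr rfl fun S _ => hcoeff S, ← Finset.sum_filter]
  refine (sum_powerset_moebius_inversion f a.support).symm.trans
    (Finset.sum_congr ?_ fun _ _ => rfl)
  ext S
  simp

end PowerSeries

section MonomialQuotient

open MvPolynomial

variable {K σ M : Type*} [Field K] [AddCommMonoid M]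

theorem finrank_wpiece_eq_card (w : σ → M) {I : Ideal (MvPolynomial σ K)}
    {s : Set (σ →₀ ℕ)} (hI : ∀ p, p ∈ I ↔ ∀ m ∈ p.support, m ∉ s) (a : M)
    (B : Finset (σ →₀ ℕ)) (hB : ∀ m, m ∈ B ↔ m ∈ s ∧ Finsupp.weight w m = a) :
    Module.finrank K (wpiece K w I a) = B.card := by
  set q := (Ideal.Quotient.mkₐ K I).toLinearMap
  have hq : ∀ p, q p = 0 ↔ p ∈ I := fun p => Ideal.Quotient.eq_zero_iff_mem
  let v : B → MvPolynomial σ K := fun m => monomial m.1 1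
  have hspan : wpiece K w I a = Submodule.span K (Set.range (q ∘ v)) := by
    rw [wpiece, weightedHomogeneousSubmodule_eq_finsupp_supported,
      AddMonoidAlgebra.supported_eq_span_single, Submodule.map_span, Set.range_comp]
    apply le_antisymm
    · rw [Submodule.span_le]
      rintro _ ⟨_, ⟨m, hm, rfl⟩, rfl⟩
      by_cases hms : m ∈ s
      · exact Submodule.subset_span ⟨v ⟨m, (hB m).2 ⟨hms, hm⟩⟩, ⟨_, rfl⟩, rfl⟩
      · change q (monomial m 1) ∈ _
        have : q (monomial m 1) = 0 := (hq _).2 <| (hI _).2 fun m' hm' => by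
          rwa [Finset.mem_singleton.mp (support_monomial_subset hm')]
        rw [this]
        exact Submodule.zero_mem _
    · refine Submodule.span_mono (Set.image_mono ?_)
      rintro _ ⟨⟨m, hmB⟩, rfl⟩
      exact ⟨m, ((hB m).1 hmB).2, rfl⟩
  have hv : LinearIndependent K v :=
    (basisMonomials σ K).linearIndependent.comp _ Subtype.val_injective
  have hli : LinearIndependent K (q ∘ v) := by
    refine hv.map (Submodule.disjoint_def.mpr fun p hp hpker => ?_)
    have hsupp : ↑p.support ⊆ (B : Set (σ →₀ ℕ)) := by
      refine AddMonoidAlgebra.mem_supported.mp (Submodule.span_le.mpr ?_ hp)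
      rintro _ ⟨m, rfl⟩
      exact (Finset.coe_subset.mpr (support_monomial_subset)).trans (by simp)
    have hpI := (hI p).1 ((hq p).1 hpker)
    exact support_eq_empty.mp (Finset.eq_empty_of_forall_notMem fun m hm =>
      hpI m hm ((hB m).1 (hsupp hm)).1)
  rw [hspan, finrank_span_eq_card hli, Fintype.card_coe]

end MonomialQuotient

section ColorGrading

variable {α ι : Type*} (κ : α → ι)

lemma weight_single_color_apply [DecidableEq ι] (m : α →₀ ℕ) (i : ι) :
    Finsupp.weight (fun v => Finsupp.single (κ v) 1) m i =
      ∑ v ∈ m.support with κ v = i, m v := by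
  rw [Finsupp.weight_apply, Finsupp.sum, Finsupp.finsetSum_apply, Finset.sum_filter]
  refine Finset.sum_congr rfl fun v _ => ?_
  simp [Finsupp.single_apply]

lemma support_weight_single_color [DecidableEq ι] (m : α →₀ ℕ) :
    (Finsupp.weight (fun v => Finsupp.single (κ v) 1) m).support = m.support.image κ := by
  ext i
  simp only [Finsupp.mem_support_iff, weight_single_color_apply, Ne, Finset.sum_eq_zero_iff,
    Finset.mem_filter, not_forall, Finset.mem_image]
  exact ⟨fun ⟨v, ⟨hv, hvi⟩, _⟩ => ⟨v, hv, hvi⟩, fun ⟨v, hv, hvi⟩ => ⟨v, ⟨hv, hvi⟩, hv⟩⟩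

noncomputable def faceExp (a : ι →₀ ℕ) (F : Finset α) : α →₀ ℕ :=
  ∑ v ∈ F, Finsupp.single v (a (κ v))

lemma faceExp_apply [DecidableEq α] (a : ι →₀ ℕ) (F : Finset α) (v : α) :
    faceExp κ a F v = if v ∈ F then a (κ v) else 0 := by
  simp [faceExp, Finsupp.finsetSum_apply, Finsupp.single_apply]

lemma support_faceExp [DecidableEq α] {a : ι →₀ ℕ} {F : Finset α} (h : ∀ v ∈ F, a (κ v) ≠ 0) :
    (faceExp κ a F).support = F := by
  ext v
  by_cases hv : v ∈ F <;> simp [faceExp_apply, hv, h]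

lemma weight_faceExp [DecidableEq ι] {a : ι →₀ ℕ} {F : Finset α} (hinj : Set.InjOn κ F)
    (himg : F.image κ = a.support) :
    Finsupp.weight (fun v => Finsupp.single (κ v) 1) (faceExp κ a F) = a := by
  rw [faceExp, map_sum]
  simp only [Finsupp.weight_single, Finsupp.smul_single, smul_eq_mul, mul_one]
  rw [← Finset.sum_image (f := fun i => Finsupp.single i (a i)) hinj, himg]
  exact Finsupp.sum_single a

lemma eq_faceExp_of_injOn [DecidableEq α] [DecidableEq ι] {m : α →₀ ℕ}
    (hinj : Set.InjOn κ m.support) :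
    m = faceExp κ (Finsupp.weight (fun v => Finsupp.single (κ v) 1) m) m.support := by
  ext v
  rw [faceExp_apply]
  split_ifs with hv
  · rw [weight_single_color_apply, Finset.sum_eq_single_of_mem v (by simp [hv])]
    intro u hu huv
    exact absurd (hinj (Finset.mem_filter.mp hu).1 hv (Finset.mem_filter.mp hu).2) huv
  · exact Finsupp.notMem_support_iff.mp hv

end ColorGrading

section StanleyReisner

variable {Δ : Finset (Finset V)}

lemma mem_srIdeal_iff {K : Type*} [Field K] (hΔ : IsComplex Δ) (p : MvPolynomial V K) :
    p ∈ srIdeal K Δ ↔ ∀ m ∈ p.support, m.support ∉ Δ := by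
  have hgen : {m : MvPolynomial V K | ∃ F : Finset V, F ∉ Δ ∧ m = ∏ v ∈ F, MvPolynomial.X v} =
      (fun e => MvPolynomial.monomial e 1) '' (sqfreeExp '' {F | F ∉ Δ}) := by
    ext q
    simp only [Set.mem_ofPred_eq, Set.image_image, sqfreeExp, MvPolynomial.monomial_sum_one]
    exact ⟨fun ⟨F, hF, hq⟩ => ⟨F, hF, hq.symm⟩, fun ⟨F, hF, hq⟩ => ⟨F, hF, hq.symm⟩⟩
  rw [srIdeal, hgen, MvPolynomial.mem_ideal_span_monomial_image]
  refine forall₂_congr fun m _ =>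
    ⟨?_, fun hm => ⟨_, ⟨m.support, hm, rfl⟩, sqfreeExp_le_iff.mpr le_rfl⟩⟩
  rintro ⟨_, ⟨F, hF, rfl⟩, hle⟩ hm
  exact hF (hΔ.2 _ hm _ (sqfreeExp_le_iff.mp hle))

lemma IsBalanced.injOn {d : ℕ} {κ : V → Fin d} (hκ : IsBalanced d Δ κ) (hΔ : IsComplex Δ)
    {F : Finset V} (hF : F ∈ Δ) : Set.InjOn κ F := by
  intro x hx y hy hxy
  by_contra hne
  have hedge : ({x, y} : Finset V) ∈ Δ :=
    hΔ.2 F hF _ (Finset.insert_subset hx (Finset.singleton_subset_iff.mpr hy))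
  exact hκ _ hedge (Finset.card_pair hne) x (by simp) y (by simp) hne hxy

theorem finrank_wpiece_srIdeal (K : Type*) [Field K] {d : ℕ} (hΔ : IsComplex Δ) {κ : V → Fin d}
    (hκ : IsBalanced d Δ κ) (a : Fin d →₀ ℕ) :
    Module.finrank K (wpiece K (fun v => Finsupp.single (κ v) 1) (srIdeal K Δ) a) =
      fFlag κ Δ a.support := by
  set Φ := Δ.filter fun F => F.image κ = a.support
  have hΦ : ∀ F ∈ Φ, F ∈ Δ ∧ F.image κ = a.support := fun F hF => Finset.mem_filter.mp hF
  have hsupp : ∀ F ∈ Φ, (faceExp κ a F).support = F := fun F hF =>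
    support_faceExp κ fun v hv => Finsupp.mem_support_iff.mp <|
      (hΦ F hF).2 ▸ Finset.mem_image_of_mem κ hv
  have hinj : Set.InjOn (faceExp κ a) Φ := fun F hF G hG h => by
    rw [← hsupp F hF, ← hsupp G hG, h]
  rw [finrank_wpiece_eq_card (s := {m | m.support ∈ Δ}) _ (mem_srIdeal_iff hΔ) a
    (Φ.image (faceExp κ a)), Finset.card_image_of_injOn hinj]
  · rfl
  intro m
  rw [Finset.mem_image, Set.mem_ofPred_eq]
  constructor
  · rintro ⟨F, hF, rfl⟩
    exact ⟨(hsupp F hF).symm ▸ (hΦ F hF).1,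
      weight_faceExp κ (hκ.injOn hΔ (hΦ F hF).1) (hΦ F hF).2⟩
  · rintro ⟨hm, rfl⟩
    refine ⟨m.support, Finset.mem_filter.mpr ⟨hm, ?_⟩, ?_⟩
    · exact (support_weight_single_color κ m).symm
    · exact (eq_faceExp_of_injOn κ (hκ.injOn hΔ hm)).symm

end StanleyReisner

theorem graded_hilbert_series_general (K : Type*) [Field K] (n d : ℕ) (Δ : Finset (Finset (Fin n)))
    (hΔ : IsComplex Δ)
    (κ : Fin n → Fin d) (hκ : IsBalanced d Δ κ) :
    (show MvPowerSeries (Fin d) ℤ from fun a : Fin d →₀ ℕ =>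
        (Module.finrank K
          (wpiece K (fun v => Finsupp.single (κ v) 1) (srIdeal K Δ) a) : ℤ)) *
      ∏ i : Fin d, (1 - MvPowerSeries.X i) =
    ∑ S ∈ (Finset.univ : Finset (Fin d)).powerset,
      (hFlag κ Δ S : MvPowerSeries (Fin d) ℤ) * ∏ i ∈ S, MvPowerSeries.X i := by
  have hilb : (show MvPowerSeries (Fin d) ℤ from fun a : Fin d →₀ ℕ =>
      (Module.finrank K (wpiece K (fun v => Finsupp.single (κ v) 1) (srIdeal K Δ) a) : ℤ)) =
      supportSeries fun S => (fFlag κ Δ S : ℤ) := by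
    funext a
    exact congrArg Nat.cast (finrank_wpiece_srIdeal K hΔ hκ a)
  rw [hilb, supportSeries_mul_prod_one_sub_X]
  refine Finset.sum_congr rfl fun S _ => ?_
  rw [← eq_intCast MvPowerSeries.C]
  rfl

/-- Lemma 2.2(i).
For a balanced `(d-1)`-dimensional simplicial complex `Δ`, the `ℤ^d`-graded Hilbert
series of `K[Δ]` (with `deg x_v = e_{κ(v)}`) satisfies
`Hilb(K[Δ]) · ∏_{i=1}^d (1 - t_i) = ∑_{S ⊆ [d]} h_S(Δ) ∏_{i ∈ S} t_i`,
an identity of formal power series in `t_1, …, t_d` (stated here after clearing the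
denominator `∏ (1 - t_i)`, a unit in the power series ring). -/
theorem graded_hilbert_series (K : Type*) [Field K] (n d : ℕ) (Δ : Finset (Finset (Fin n)))
    (hΔ : IsComplex Δ) (hdim : DimEq d Δ)
    (κ : Fin n → Fin d) (hκ : IsBalanced d Δ κ) :
    (show MvPowerSeries (Fin d) ℤ from fun a : Fin d →₀ ℕ =>
        (Module.finrank K
          (wpiece K (fun v => Finsupp.single (κ v) 1) (srIdeal K Δ) a) : ℤ)) *
      ∏ i : Fin d, (1 - MvPowerSeries.X i) =
    ∑ S ∈ (Finset.univ : Finset (Fin d)).powerset,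
      (hFlag κ Δ S : MvPowerSeries (Fin d) ℤ) * ∏ i ∈ S, MvPowerSeries.X i :=
  graded_hilbert_series_general K n d Δ hΔ κ hκ

end BGLB
end

section
/- Let Δ be a (d−1)-dimensional balanced simplicial complex on [n] with coloring map κ, let K be an infinite field, and for i ∈ [d] let θ_i = Σ_{v ∈ [n], κ(v)=i} x_v. Then θ_1,…,θ_d is a linear system of parameters of the Stanley-Reisner ring K[Δ], i.e., K[Δ]/((θ_1,…,θ_d)K[Δ]) is a finite-dimensional K-vector space. -/
open Finset BigOperators

namespace BGLB

variable {V : Type*} [DecidableEq V]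

open MvPolynomial

theorem finite_quotient_of_isNilpotent_X {R σ : Type*} [CommRing R] [Finite σ]
    (J : Ideal (MvPolynomial σ R)) (hX : ∀ i, IsNilpotent (Ideal.Quotient.mk J (X i))) :
    Module.Finite R (MvPolynomial σ R ⧸ J) := by
  have hgen : Algebra.adjoin R (Set.range fun i => Ideal.Quotient.mkₐ R J (X i)) = ⊤ := by
    rw [Set.range_comp', ← AlgHom.map_adjoin, adjoin_range_X, Algebra.map_top,
      AlgHom.range_eq_top]
    exact Ideal.Quotient.mkₐ_surjective R J
  have hint : ∀ x ∈ Set.range fun i => Ideal.Quotient.mkₐ R J (X i), IsIntegral R x := by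
    rintro _ ⟨i, rfl⟩
    obtain ⟨k, hk⟩ := hX i
    exact ⟨Polynomial.X ^ k, Polynomial.monic_X_pow k, by simpa using hk⟩
  have hfin := Algebra.finite_adjoin_of_finite_of_isIntegral (Set.finite_range _) hint
  rw [hgen] at hfin
  exact Module.Finite.equiv Subalgebra.topEquiv.toLinearEquiv

theorem X_sq_mem_of_sum_X_mem {R σ : Type*} [CommRing R] [DecidableEq σ]
    {J : Ideal (MvPolynomial σ R)} {s : Finset σ} {v : σ} (hv : v ∈ s)
    (hsum : ∑ w ∈ s, X w ∈ J) (hmul : ∀ w ∈ s, w ≠ v → X v * X w ∈ J) :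
    X v ^ 2 ∈ J := by
  have hsplit : (X v : MvPolynomial σ R) ^ 2 =
      X v * ∑ w ∈ s, X w - ∑ w ∈ s.erase v, X v * X w := by
    rw [mul_sum, ← add_sum_erase _ _ hv, sq, add_sub_cancel_right]
  rw [hsplit]
  exact J.sub_mem (J.mul_mem_left _ hsum)
    (J.sum_mem fun w hw => hmul w (mem_of_mem_erase hw) (ne_of_mem_erase hw))

theorem X_mul_X_mem_srIdeal (K : Type*) [Field K] {Δ : Finset (Finset V)} {v w : V}
    (hvw : v ≠ w) (hΔ : {v, w} ∉ Δ) : X v * X w ∈ srIdeal K Δ :=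
  Ideal.subset_span ⟨{v, w}, hΔ, (prod_pair hvw).symm⟩

theorem IsBalanced.pair_notMem {d : ℕ} {Δ : Finset (Finset V)} {κ : V → Fin d}
    (hκ : IsBalanced d Δ κ) {v w : V} (hvw : v ≠ w) (hcol : κ v = κ w) : {v, w} ∉ Δ :=
  fun hmem => hκ _ hmem (card_pair hvw) v (by simp) w (by simp) hvw hcol

theorem colorSums_lsop_general (K : Type*) [Field K] (n d : ℕ)
    (Δ : Finset (Finset (Fin n)))
    (κ : Fin n → Fin d) (hκ : IsBalanced d Δ κ) :
    FiniteDimensional K (MvPolynomial (Fin n) K ⧸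
      (srIdeal K Δ ⊔ Ideal.span (Set.range fun i : Fin d => colorSum K κ i))) := by
  refine finite_quotient_of_isNilpotent_X _ fun v => ⟨2, ?_⟩
  rw [← map_pow, Ideal.Quotient.eq_zero_iff_mem]
  -- x_v θ_{κ v} ≡ x_v², since x_v x_w is a non-face monomial whenever w ≠ v has the same color
  refine X_sq_mem_of_sum_X_mem (s := univ.filter (κ · = κ v)) (by simp)
    (Ideal.mem_sup_right (Ideal.subset_span ⟨κ v, rfl⟩)) fun w hw hwv => ?_
  have hcol : κ v = κ w := ((mem_filter.mp hw).2).symm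
  exact Ideal.mem_sup_left (X_mul_X_mem_srIdeal K hwv.symm (hκ.pair_notMem hwv.symm hcol))

/-- Lemma 2.2(iii).
For a balanced `(d-1)`-dimensional simplicial complex `Δ`, the color sums
`θ_1, …, θ_d` form a linear system of parameters of `K[Δ]`: the quotient
`K[Δ]/((θ_1,…,θ_d) K[Δ])` is a finite-dimensional `K`-vector space. -/
theorem colorSums_lsop (K : Type*) [Field K] [Infinite K] (n d : ℕ)
    (Δ : Finset (Finset (Fin n))) (hΔ : IsComplex Δ) (hdim : DimEq d Δ)
    (κ : Fin n → Fin d) (hκ : IsBalanced d Δ κ) :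
    FiniteDimensional K (MvPolynomial (Fin n) K ⧸
      (srIdeal K Δ ⊔ Ideal.span (Set.range fun i : Fin d => colorSum K κ i))) :=
  colorSums_lsop_general K n d Δ κ hκ

end BGLB
end

section
/- Let Δ be a (d−1)-dimensional balanced simplicial complex with coloring map κ. For all integers i, k with 0 ≤ i ≤ k ≤ d, one has C(d−i, k−i) · h_i(Δ) = Σ_{T ⊆ [d], #T = k} h_i(Δ_T), where the sum is over all k-element subsets T of [d] and Δ_T is the rank-selected subcomplex. -/
open Finset BigOperators

namespace BGLB

variable {V : Type*} [DecidableEq V]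

theorem card_image_of_isBalanced {d : ℕ} {Δ : Finset (Finset V)} (hΔ : IsComplex Δ)
    {κ : V → Fin d} (hκ : IsBalanced d Δ κ) {F : Finset V} (hF : F ∈ Δ) :
    #(F.image κ) = #F := by
  refine card_image_of_injOn fun x hx y hy hxy => by_contra fun hne => ?_
  have hpair : {x, y} ∈ Δ := hΔ.2 F hF _ (insert_subset hx (singleton_subset_iff.2 hy))
  exact hκ _ hpair (card_pair hne) x (by simp) y (by simp) hne hxy

/-- Double counting of the pairs (face `F` with `j` vertices, `k`-set of colours `T ⊇ κ(F)`):
since `κ` is injective on faces, each `F` lies in `C(d - j, k - j)` of the complexes `Δ_T`. -/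
theorem sum_fNum_rankSel {d : ℕ} {Δ : Finset (Finset V)} (hΔ : IsComplex Δ)
    {κ : V → Fin d} (hκ : IsBalanced d Δ κ) {j k : ℕ} (hjk : j ≤ k) :
    ∑ T ∈ powersetCard k (univ : Finset (Fin d)), fNum (rankSel Δ κ T) j =
      (d - j).choose (k - j) * fNum Δ j := by
  set r : Finset V → Finset (Fin d) → Prop := fun F T => F.image κ ⊆ T
  have hbelow : ∀ T, fNum (rankSel Δ κ T) j = #((Δ.filter (#· = j)).bipartiteBelow r T) := by
    intro T
    simp only [fNum, rankSel, bipartiteBelow, r, filter_filter, image_subset_iff]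
    exact congrArg card (filter_congr fun _ _ => and_comm)
  have habove : ∀ F ∈ Δ.filter (#· = j),
      #((powersetCard k univ).bipartiteAbove r F) = (d - j).choose (k - j) := by
    intro F hF
    rw [mem_filter] at hF
    have himage : #(F.image κ) = j := (card_image_of_isBalanced hΔ hκ hF.1).trans hF.2
    rw [bipartiteAbove, card_filter_powersetCard_subset _ _ _ (subset_univ _) (himage ▸ hjk),
      himage, card_univ, Fintype.card_fin]
  rw [sum_congr rfl fun T _ => hbelow T, ← sum_card_bipartiteAbove_eq_sum_card_bipartiteBelow,
    sum_const_nat habove, fNum, mul_comm]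

theorem choose_sub_mul_choose_sub {d i j k : ℕ} (hji : j ≤ i) (hik : i ≤ k) :
    (d - j).choose (k - j) * (k - j).choose (i - j) =
      (d - j).choose (i - j) * (d - i).choose (k - i) := by
  rw [Nat.choose_mul (by omega), show d - j - (i - j) = d - i by omega,
    show k - j - (i - j) = k - i by omega]

theorem rank_selection_h_sum_general (n d : ℕ) (Δ : Finset (Finset (Fin n)))
    (hΔ : IsComplex Δ)
    (κ : Fin n → Fin d) (hκ : IsBalanced d Δ κ)
    (i k : ℕ) (hik : i ≤ k) :
    ((d - i).choose (k - i) : ℤ) * hNum d Δ i =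
      ∑ T ∈ Finset.powersetCard k (Finset.univ : Finset (Fin d)), hNum k (rankSel Δ κ T) i := by
  simp only [hNum, mul_sum]
  rw [sum_comm]
  refine sum_congr rfl fun j hj => ?_
  have hji : j ≤ i := Nat.lt_succ_iff.mp (mem_range.mp hj)
  have hcount : ∑ T ∈ powersetCard k univ, (fNum (rankSel Δ κ T) j : ℤ) =
      (d - j).choose (k - j) * fNum Δ j := by
    exact_mod_cast sum_fNum_rankSel hΔ hκ (hji.trans hik)
  have hchoose : ((d - j).choose (k - j) * (k - j).choose (i - j) : ℤ) =
      (d - j).choose (i - j) * (d - i).choose (k - i) := by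
    exact_mod_cast choose_sub_mul_choose_sub hji hik
  rw [← mul_sum, hcount]
  linear_combination (-(-1 : ℤ) ^ (i - j) * fNum Δ j) * hchoose

/-- Lemma 3.3.
For a `(d-1)`-dimensional balanced simplicial complex `Δ` and `i ≤ k ≤ d`,
`C(d-i, k-i) · h_i(Δ) = ∑_{T ⊆ [d], #T = k} h_i(Δ_T)`, where the `h`-numbers of
`Δ_T` are taken with dimension parameter `k = #T`. -/
theorem rank_selection_h_sum (n d : ℕ) (Δ : Finset (Finset (Fin n)))
    (hΔ : IsComplex Δ) (hdim : DimEq d Δ)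
    (κ : Fin n → Fin d) (hκ : IsBalanced d Δ κ)
    (i k : ℕ) (hik : i ≤ k) (hkd : k ≤ d) :
    ((d - i).choose (k - i) : ℤ) * hNum d Δ i =
      ∑ T ∈ Finset.powersetCard k (Finset.univ : Finset (Fin d)), hNum k (rankSel Δ κ T) i :=
  rank_selection_h_sum_general n d Δ hΔ κ hκ i k hik

end BGLB
end

section
/- Let Δ be a (d−1)-dimensional pure balanced simplicial complex on vertex set [n]. For 0 ≤ i ≤ d, one has Σ_{v ∈ [n]} g̅_i(lk_Δ(v)) = i·g̅_{i+1}(Δ) + (d−i)·g̅_i(Δ), where for the (d−2)-dimensional complexes lk_Δ(v) the balanced g-numbers are taken with respect to dimension parameter d−1: g̅_i(lk_Δ(v)) = i·h_i(lk_Δ(v)) − (d−i)·h_{i−1}(lk_Δ(v)), and g̅_j(Δ) = j·h_j(Δ) − (d−j+1)·h_{j−1}(Δ). -/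
open Finset BigOperators

namespace BGLB

variable {V : Type*} [DecidableEq V]

section Aux

lemma singletonUnion (v : V) (F : Finset V) : ({v} : Finset V) ∪ F = insert v F := by
  ext x; simp [or_comm]

lemma sum_fNum_link (n : ℕ) (Δ : Finset (Finset (Fin n))) (hΔ : IsComplex Δ) (j : ℕ) :
    ∑ v : Fin n, fNum (link Δ {v}) j = (j + 1) * fNum Δ (j + 1) := by
  classical
  have lhs : ∑ v : Fin n, fNum (link Δ {v}) j
      = ((univ : Finset (Fin n)).sigma fun v => (link Δ {v}).filter fun F => F.card = j).card := by
    rw [Finset.card_sigma]; rfl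
  have rhs : (j + 1) * fNum Δ (j + 1)
      = ((Δ.filter fun G => G.card = j + 1).sigma fun G => G).card := by
    rw [Finset.card_sigma, fNum]
    rw [Finset.sum_congr rfl (fun G hG => (Finset.mem_filter.mp hG).2)]
    rw [Finset.sum_const, smul_eq_mul, mul_comm]
  rw [lhs, rhs]
  apply Finset.card_bij' (i := fun x _ => (⟨insert x.1 x.2, x.1⟩ : (_ : Finset (Fin n)) × Fin n))
    (j := fun y _ => (⟨y.2, y.1.erase y.2⟩ : (_ : Fin n) × Finset (Fin n)))
  · rintro ⟨v, F⟩ hx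
    simp only [Finset.mem_sigma, Finset.mem_filter, link, Finset.mem_univ, true_and] at hx ⊢
    obtain ⟨⟨hF, hdisj, hins⟩, hcard⟩ := hx
    have hvF : v ∉ F := by simpa [Finset.disjoint_singleton_left] using hdisj
    refine ⟨⟨by simpa [singletonUnion] using hins, ?_⟩, Finset.mem_insert_self _ _⟩
    rw [Finset.card_insert_of_notMem hvF, hcard]
  · rintro ⟨G, v⟩ hy
    simp only [Finset.mem_sigma, Finset.mem_filter, link, Finset.mem_univ, true_and] at hy ⊢
    obtain ⟨⟨hG, hcard⟩, hv⟩ := hy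
    have herase : G.erase v ∈ Δ := hΔ.2 G hG _ (Finset.erase_subset _ _)
    refine ⟨⟨herase, ?_, ?_⟩, ?_⟩
    · simp [Finset.disjoint_singleton_left]
    · simpa [singletonUnion, Finset.insert_erase hv] using hG
    · rw [Finset.card_erase_of_mem hv, hcard]; rfl
  · rintro ⟨v, F⟩ hx
    simp only [Finset.mem_sigma, Finset.mem_filter, link, Finset.mem_univ, true_and] at hx
    have hvF : v ∉ F := by
      simpa [Finset.disjoint_singleton_left] using hx.1.2.1
    simp [Finset.erase_insert hvF]
  · rintro ⟨G, v⟩ hy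
    simp only [Finset.mem_sigma, Finset.mem_filter, Finset.mem_univ, true_and] at hy
    simp [Finset.insert_erase hy.2]


lemma keySum (d i : ℕ) (hi : i ≤ d) (f : ℕ → ℤ) :
    ∑ j ∈ range (i + 1), (-1 : ℤ) ^ (i - j) * ((d - 1 - j).choose (i - j)) * ((j + 1) * f (j + 1))
    = (i + 1 : ℤ) * ∑ j ∈ range (i + 2), (-1 : ℤ) ^ (i + 1 - j) * ((d - j).choose (i + 1 - j)) * f j
      + ((d : ℤ) - i) * ∑ j ∈ range (i + 1), (-1 : ℤ) ^ (i - j) * ((d - j).choose (i - j)) * f j := by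
  set T1 : ℕ → ℤ := fun j => (-1 : ℤ) ^ (i + 1 - j) * ((d - j).choose (i + 1 - j)) * f j with hT1
  set T2 : ℕ → ℤ := fun j => (-1 : ℤ) ^ (i - j) * ((d - j).choose (i - j)) * f j with hT2
  have e1 : ∑ j ∈ range (i + 2), T1 j = T1 0 + ∑ j ∈ range (i + 1), T1 (j + 1) := by
    rw [Finset.sum_range_succ']; ring
  have e2 : ∑ j ∈ range (i + 1), T2 j
      = T2 0 - T2 (i + 1) + ∑ j ∈ range (i + 1), T2 (j + 1) := by
    rw [Finset.sum_range_succ' T2 i, Finset.sum_range_succ (fun j => T2 (j + 1)) i]; ring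
  have zero : (i + 1 : ℤ) * T1 0 + ((d : ℤ) - i) * T2 0 = 0 := by
    have h := Nat.add_one_mul_choose_eq d i
    have h2 : d.choose (i + 1) * (i + 1) = d.choose i * (d - i) := Nat.choose_succ_right_eq d i
    have hc : ((d : ℤ) - i) = ((d - i : ℕ) : ℤ) := by
      push_cast [Nat.cast_sub hi]; ring
    have h2' : (d.choose (i + 1) : ℤ) * (i + 1) = (d.choose i : ℤ) * ((d : ℤ) - i) := by
      rw [hc]; exact_mod_cast h2
    simp only [hT1, hT2, Nat.sub_zero]
    rw [pow_succ]
    linear_combination (-(-1 : ℤ) ^ i * f 0) * h2'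
  have main : ∀ j ∈ range (i + 1),
      (-1 : ℤ) ^ (i - j) * ((d - 1 - j).choose (i - j)) * ((j + 1) * f (j + 1))
        + (if j = i then ((d : ℤ) - i) * T2 (i + 1) else 0)
      = (i + 1 : ℤ) * T1 (j + 1) + ((d : ℤ) - i) * T2 (j + 1) := by
    intro j hj
    rw [Finset.mem_range] at hj
    rcases eq_or_lt_of_le (Nat.lt_succ_iff.mp hj) with rfl | hlt
    · simp only [if_pos rfl, hT1, hT2, Nat.sub_self]
      have h2 : d - (j + 1) = d - 1 - j := by omega
      have h3 : j - (j + 1) = 0 := by omega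
      rw [h2, h3]
      simp only [if_true, pow_zero, Nat.choose_zero_right, Nat.cast_one]
      ring
    · rw [if_neg (by omega)]
      simp only [hT1, hT2]
      have h1 : i + 1 - (j + 1) = i - j := by omega
      have h2 : d - (j + 1) = d - 1 - j := by omega
      rw [h1, h2]
      -- key binomial identity
      obtain ⟨k, hk⟩ : ∃ k, i - j = k + 1 := ⟨i - j - 1, by omega⟩
      have hch : (d - 1 - j).choose (k + 1) * (k + 1) = (d - 1 - j).choose k * (d - i) := by
        have := Nat.choose_succ_right_eq (d - 1 - j) k
        rw [this]
        congr 1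
        omega
      have hik : i - (j + 1) = k := by omega
      rw [hk, hik]
      have hcast : ((d - 1 - j).choose (k + 1) : ℤ) * (k + 1)
          = ((d - 1 - j).choose k : ℤ) * ((d : ℤ) - i) := by
        have hc : ((d : ℤ) - i) = ((d - i : ℕ) : ℤ) := by push_cast [Nat.cast_sub hi]; ring
        rw [hc]; exact_mod_cast hch
      have hj1 : ((j : ℤ) + 1) = (i : ℤ) + 1 - (k + 1) := by
        have : (i : ℤ) - j = k + 1 := by
          have := hk
          omega
        linarith
      rw [pow_succ]
      linear_combination ((-1 : ℤ) ^ k * f (j + 1)) * hcast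
        - ((-1 : ℤ) ^ k * f (j + 1) * ((d - 1 - j).choose (k + 1) : ℤ)) * hj1
  have hsum := Finset.sum_congr rfl main
  rw [Finset.sum_add_distrib, Finset.sum_ite_eq' (range (i + 1)) i] at hsum
  rw [if_pos (by simp) ] at hsum
  have hsplit : ∑ x ∈ range (i + 1), ((i + 1 : ℤ) * T1 (x + 1) + ((d : ℤ) - i) * T2 (x + 1))
      = (i + 1 : ℤ) * ∑ x ∈ range (i + 1), T1 (x + 1)
        + ((d : ℤ) - i) * ∑ x ∈ range (i + 1), T2 (x + 1) := by
    rw [Finset.sum_add_distrib, Finset.mul_sum, Finset.mul_sum]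
  rw [hsplit] at hsum
  rw [e1, e2]
  linear_combination hsum - zero

lemma sum_hNum_link (n d : ℕ) (Δ : Finset (Finset (Fin n))) (hΔ : IsComplex Δ)
    (i : ℕ) (hi : i ≤ d) :
    ∑ v : Fin n, hNum (d - 1) (link Δ {v}) i
      = (i + 1 : ℤ) * hNum d Δ (i + 1) + ((d : ℤ) - i) * hNum d Δ i := by
  unfold hNum
  rw [Finset.sum_comm]
  have step : ∀ j ∈ Finset.range (i + 1),
      ∑ v : Fin n, (-1 : ℤ) ^ (i - j) * ((d - 1 - j).choose (i - j)) * (fNum (link Δ {v}) j : ℤ)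
      = (-1 : ℤ) ^ (i - j) * ((d - 1 - j).choose (i - j))
          * ((j + 1) * ((fun j => (fNum Δ j : ℤ)) (j + 1))) := by
    intro j _
    rw [← Finset.mul_sum, ← Nat.cast_sum]
    rw [sum_fNum_link n Δ hΔ j]
    push_cast; ring
  rw [Finset.sum_congr rfl step]
  exact keySum d i hi (fun j => (fNum Δ j : ℤ))

end Aux

/-- Lemma 3.5.
For a `(d-1)`-dimensional pure balanced simplicial complex `Δ` on `[n]` and `0 ≤ i ≤ d`,
`∑_{v ∈ [n]} g̅_i(lk_Δ(v)) = i · g̅_{i+1}(Δ) + (d - i) · g̅_i(Δ)`, the balanced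
`g`-numbers of the links being taken with dimension parameter `d - 1`. -/
theorem sum_links_balanced_g (n d : ℕ) (Δ : Finset (Finset (Fin n)))
    (hΔ : IsComplex Δ) (hdim : DimEq d Δ) (hpure : IsPure d Δ)
    (hbal : ∃ κ : Fin n → Fin d, IsBalanced d Δ κ)
    (i : ℕ) (hi : i ≤ d) :
    ∑ v : Fin n, gbar (d - 1) (link Δ {v}) i =
      (i : ℤ) * gbar d Δ (i + 1) + ((d : ℤ) - i) * gbar d Δ i := by
  classical
  rcases i with _ | m
  · simp [gbar]
  · have h1d : 1 ≤ d := le_trans (Nat.succ_le_succ (Nat.zero_le m)) hi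
    have hd1 : ((d - 1 : ℕ) : ℤ) = (d : ℤ) - 1 := by
      push_cast [Nat.cast_sub h1d]; ring
    have hm : m ≤ d := le_trans (Nat.le_succ m) hi
    simp only [gbar]
    rw [Finset.sum_sub_distrib, ← Finset.mul_sum, ← Finset.mul_sum]
    rw [sum_hNum_link n d Δ hΔ (m + 1) hi, sum_hNum_link n d Δ hΔ m hm, hd1]
    push_cast
    ring


end BGLB
end
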